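/- Let G be a simple 2-connected graph satisfying: (i) no vertex of degree 2 in G is adjacent to a vertex of degree at most 5; (ii) every vertex u of degree at least 6 that is adjacent to some 2-vertex satisfies n_2(u) + n_3(u) ≤ d(u) − 3; (iii) no vertex u of degree at least 6 adjacent to some 2-vertex satisfies both n_2(u) + n_3(u) = d(u) − 3 and n_3(u) ≤ 3; (iv) no vertex of degree 5 in G has three or more neighbors of degree 3. If u is a vertex of H with d_H(u) = 5, then n_3(u) ≤ 2, and moreover if n_3(u) = 2 then d(u) = 5. -/

import Mathlib

variable {V : Type*} [Fintype V] [DecidableEq V]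

/-- `G` is 2-connected: it is connected, has at least 3 vertices, and deleting any
single vertex leaves it connected. -/
def TwoConnected (G : SimpleGraph V) : Prop :=
  G.Connected ∧ 3 ≤ Fintype.card V ∧
    ∀ v : V, (G.induce {w : V | w ≠ v}).Connected

/-- `nk G u m` is the number of neighbors of `u` in `G` having degree exactly `m`. -/
def nk (G : SimpleGraph V) [DecidableRel G.Adj] (u : V) (m : ℕ) : ℕ :=
  ((G.neighborFinset u).filter fun w => G.degree w = m).card

/-- `delTwo G` is the graph `H` obtained from `G` by deleting all 2-vertices:
it keeps exactly the edges of `G` joining two vertices of degree at least 3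
(deleted vertices become isolated). -/
def delTwo (G : SimpleGraph V) [DecidableRel G.Adj] : SimpleGraph V where
  Adj x y := G.Adj x y ∧ 3 ≤ G.degree x ∧ 3 ≤ G.degree y
  symm := ⟨fun x y h => ⟨h.1.symm, h.2.2, h.2.1⟩⟩
  loopless := ⟨fun x h => G.loopless.irrefl x h.1⟩

instance (G : SimpleGraph V) [DecidableRel G.Adj] : DecidableRel (delTwo G).Adj :=
  fun x y => inferInstanceAs (Decidable (G.Adj x y ∧ 3 ≤ G.degree x ∧ 3 ≤ G.degree y))

/-! 2-connectedness forces minimum degree 2, so the neighbours of `u` outside `H` are exactly its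
2-neighbours and `d(u) = d_H(u) + n₂(u) = 5 + n₂(u)`. If `n₂(u) = 0` then `d(u) = 5` and (iv)
applies; otherwise `d(u) ≥ 6`, (ii) reads `n₃(u) ≤ 2`, and `n₃(u) = 2` is excluded by (iii). -/

open Finset SimpleGraph

/- A neighbour `t` of `v` exists since `G` is connected, and a second one since `v` still has a
neighbour in `G - t`. -/
lemma TwoConnected.two_le_degree {G : SimpleGraph V} [DecidableRel G.Adj] (h : TwoConnected G)
    (v : V) : 2 ≤ G.degree v := by
  obtain ⟨hconn, hcard, hdel⟩ := h
  have : Nontrivial V := Fintype.one_lt_card_iff_nontrivial.mp (by omega)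
  obtain ⟨t, hvt⟩ := hconn.preconnected.exists_adj_of_nontrivial v
  obtain ⟨x, -, hx⟩ := exists_mem_notMem_of_card_lt_card (s := {v, t}) (t := univ)
    (by rw [card_univ]; exact (card_le_two).trans_lt (by omega))
  simp only [mem_insert, mem_singleton, not_or] at hx
  have : Nontrivial {w : V | w ≠ t} :=
    ⟨⟨v, hvt.ne⟩, ⟨x, hx.2⟩, fun h => hx.1 (congrArg Subtype.val h).symm⟩
  obtain ⟨⟨w, hwt⟩, hvw⟩ := (hdel t).preconnected.exists_adj_of_nontrivial ⟨v, hvt.ne⟩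
  calc 2 = #{t, w} := (card_pair (Ne.symm hwt)).symm
    _ ≤ #(G.neighborFinset v) := card_le_card (by simp_all [insert_subset_iff])
    _ = G.degree v := G.card_neighborFinset_eq_degree v

omit [DecidableEq V] in
lemma delTwo_degree_add_nk_two {G : SimpleGraph V} [DecidableRel G.Adj] {u : V}
    (hu : 3 ≤ G.degree u) (hnbr : ∀ w, G.Adj u w → 2 ≤ G.degree w) :
    (delTwo G).degree u + nk G u 2 = G.degree u := by
  have hH : (delTwo G).neighborFinset u = (G.neighborFinset u).filter (3 ≤ G.degree ·) := by
    ext w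
    simp only [mem_neighborFinset, mem_filter]
    exact ⟨fun h => ⟨h.1, h.2.2⟩, fun h => ⟨h.1, hu, h.2⟩⟩
  have h2 : nk G u 2 = #((G.neighborFinset u).filter (¬ 3 ≤ G.degree ·)) := by
    refine congrArg card (filter_congr fun w hw => ?_)
    have := hnbr w ((G.mem_neighborFinset u w).mp hw)
    omega
  rw [← card_neighborFinset_eq_degree, hH, h2, card_filter_add_card_filter_not,
    card_neighborFinset_eq_degree]

theorem stmt_9_general (G : SimpleGraph V) [DecidableRel G.Adj]
    (h2c : TwoConnected G)
    (hii : ∀ z : V, 6 ≤ G.degree z → (∃ t, G.Adj z t ∧ G.degree t = 2) →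
      nk G z 2 + nk G z 3 ≤ G.degree z - 3)
    (hiii : ∀ z : V, 6 ≤ G.degree z → (∃ t, G.Adj z t ∧ G.degree t = 2) →
      ¬ (nk G z 2 + nk G z 3 = G.degree z - 3 ∧ nk G z 3 ≤ 3))
    (hiv : ∀ v : V, G.degree v = 5 → nk G v 3 ≤ 2) :
    ∀ u : V, 3 ≤ G.degree u → (delTwo G).degree u = 5 →
      nk G u 3 ≤ 2 ∧ (nk G u 3 = 2 → G.degree u = 5) := by
  intro u hu hH
  have hdeg := delTwo_degree_add_nk_two hu fun w _ => h2c.two_le_degree w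
  rw [hH] at hdeg
  rcases Nat.eq_zero_or_pos (nk G u 2) with h0 | hpos
  · have h5 : G.degree u = 5 := by omega
    exact ⟨hiv u h5, fun _ => h5⟩
  · obtain ⟨t, ht⟩ := card_pos.mp hpos
    have ht2 : ∃ t, G.Adj u t ∧ G.degree t = 2 := ⟨t, by simpa using ht⟩
    have h6 : 6 ≤ G.degree u := by omega
    have hle := hii u h6 ht2
    exact ⟨by omega, fun h3 => (hiii u h6 ht2 ⟨by omega, by omega⟩).elim⟩

/-- In a 2-connected graph satisfying (i)–(iv): if `u` is a vertex of `H` with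
`d_H(u) = 5`, then `n₃(u) ≤ 2`, and if `n₃(u) = 2` then `d(u) = 5`. -/
theorem stmt_9 (G : SimpleGraph V) [DecidableRel G.Adj]
    (h2c : TwoConnected G)
    (hi : ∀ v w : V, G.Adj v w → G.degree v = 2 → ¬ G.degree w ≤ 5)
    (hii : ∀ z : V, 6 ≤ G.degree z → (∃ t, G.Adj z t ∧ G.degree t = 2) →
      nk G z 2 + nk G z 3 ≤ G.degree z - 3)
    (hiii : ∀ z : V, 6 ≤ G.degree z → (∃ t, G.Adj z t ∧ G.degree t = 2) →
      ¬ (nk G z 2 + nk G z 3 = G.degree z - 3 ∧ nk G z 3 ≤ 3))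
    (hiv : ∀ v : V, G.degree v = 5 → nk G v 3 ≤ 2) :
    ∀ u : V, 3 ≤ G.degree u → (delTwo G).degree u = 5 →
      nk G u 3 ≤ 2 ∧ (nk G u 3 = 2 → G.degree u = 5) :=
  stmt_9_general G h2c hii hiii hiv
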